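/- arXiv:1210.5577 — 2 statements merged into one kernel-verified Lean document; each statement's English description precedes it below -/
import Mathlib

section
/- Each map f_d : Q × S³ → Q × S³ (d ≥ 0) is a well-defined bijection and satisfies f_d ∘ f_d = id. -/
/-! `F` and `l` are involutions, and `f_d = (F ∘ l)^d ∘ l` is a palindromic word in them,
hence itself an involution. -/

open Quaternion

noncomputable section

/-- `S³`: the group of unit quaternions. -/
abbrev S3 : Type := Metric.sphere (0 : ℍ[ℝ]) 1

/-- Membership in the circle subgroup `S¹ ⊆ S³` of unit quaternions of the
form `a + b·i` (zero `j`- and `k`-components). -/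
def inS1 (z : S3) : Prop := (z : ℍ[ℝ]).imJ = 0 ∧ (z : ℍ[ℝ]).imK = 0

/-- The right-coset relation on `S³`: `x ∼ x'` iff `x' = z·x` for some `z ∈ S¹`. -/
def cosetRel (x x' : S3) : Prop := ∃ z : S3, inS1 z ∧ x' = z * x

/-- `Q = S³/S¹`, the set of right cosets `S¹x`; the paper's model of `S²`. -/
def Q : Type := Quot cosetRel

/-- The paper's clutching diffeomorphism `F(S¹x, y) = (S¹(x·y), y⁻¹)`. -/
def Fmap : Q × S3 → Q × S3 := fun p =>
  (Quot.lift (fun x : S3 => Quot.mk cosetRel (x * p.2))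
    (fun a b hab => by
      obtain ⟨z, hz, rfl⟩ := hab
      exact Quot.sound ⟨z, hz, mul_assoc z a p.2⟩) p.1,
   p.2⁻¹)

/-- The reflection of `ℍ` negating the `k`-component. -/
def Lq (q : ℍ[ℝ]) : ℍ[ℝ] := ⟨q.re, q.imI, q.imJ, -q.imK⟩

lemma norm_Lq (q : ℍ[ℝ]) : ‖Lq q‖ = ‖q‖ := by
  rw [show ‖Lq q‖ = Real.sqrt (normSq (Lq q)) from rfl,
    show ‖q‖ = Real.sqrt (normSq q) from rfl]
  congr 1
  rw [normSq_def', normSq_def']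
  simp [Lq]

/-- The restriction `L : S³ → S³` of the reflection negating the `k`-component. -/
def Lsphere (y : S3) : S3 :=
  ⟨Lq (y : ℍ[ℝ]), by
    have hy : ‖(y : ℍ[ℝ])‖ = 1 := mem_sphere_zero_iff_norm.mp y.2
    simp [mem_sphere_zero_iff_norm, norm_Lq, hy]⟩

/-- `l(S¹x, y) = (S¹x, L y)`. -/
def lmap : Q × S3 → Q × S3 := fun p => (p.1, Lsphere p.2)

/-- The clutching maps: `f₀ = l` and `f_d = F ∘ l ∘ f_{d-1}`. -/
def fmap : ℕ → Q × S3 → Q × S3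
  | 0 => lmap
  | d + 1 => Fmap ∘ lmap ∘ fmap d

open Function

theorem Function.Involutive.iterate_comp_comp {α : Type*} {f g : α → α}
    (hf : Involutive f) (hg : Involutive g) (n : ℕ) : Involutive ((f ∘ g)^[n] ∘ g) := by
  have hsemiconj : Semiconj g (f ∘ g) (g ∘ f) := fun _ => rfl
  have hleft : LeftInverse (f ∘ g)^[n] (g ∘ f)^[n] :=
    LeftInverse.iterate (fun x => by simp only [comp_apply, hg _, hf x]) n
  intro x
  simp only [comp_apply, (hsemiconj.iterate_right n) _, hg x, hleft x]

lemma Fmap_involutive : Involutive Fmap := by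
  rintro ⟨q, y⟩
  induction q using Quot.ind with
  | mk x => exact Prod.ext (congrArg (Quot.mk _) (mul_inv_cancel_right x y)) (inv_inv y)

lemma Lsphere_involutive : Involutive Lsphere := fun y =>
  Subtype.ext (by ext <;> simp [Lsphere, Lq])

lemma lmap_involutive : Involutive lmap := fun p =>
  Prod.ext rfl (Lsphere_involutive p.2)

lemma fmap_eq_iterate (d : ℕ) : fmap d = (Fmap ∘ lmap)^[d] ∘ lmap := by
  induction d with
  | zero => rfl
  | succ d ih => rw [fmap, ih, iterate_succ']; rfl

/-- Each clutching map `f_d : Q × S³ → Q × S³` (`d ≥ 0`) is a (well-defined) bijection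
and satisfies `f_d ∘ f_d = id`. -/
theorem stmt6 (d : ℕ) : Function.Bijective (fmap d) ∧ fmap d ∘ fmap d = id := by
  have hinv : Involutive (fmap d) := by
    rw [fmap_eq_iterate]
    exact Fmap_involutive.iterate_comp_comp lmap_involutive d
  exact ⟨hinv.bijective, hinv.comp_self⟩
end
end

section
/- Let ι̂ : Q × S³ → Q × S³ be ι̂(S¹x, y) = (S¹(j·x), y). Then ι̂ ∘ f_d = f_d ∘ ι̂ for every d ≥ 0; in particular ι̂ ∘ F = F ∘ ι̂ and ι̂ ∘ l = l ∘ ι̂. -/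
/-! Conjugation by `j` inverts the circle `S¹` (`j z = z⁻¹ j` for `z = a + b·i`), so left
multiplication by `j` descends to the coset space `Q`. Left multiplication on `Q` commutes with
`F` by associativity and with `l`, which only acts on the `S³` factor; hence it commutes with
every `f_d = F ∘ l ∘ f_{d-1}`. -/

open Quaternion

noncomputable section

/-- The quaternion `i`. -/
def iq : ℍ[ℝ] := ⟨0, 1, 0, 0⟩

/-- The quaternion `j`. -/
def jq : ℍ[ℝ] := ⟨0, 0, 1, 0⟩

/-- `j` as a unit quaternion. -/
def jS3 : S3 :=
  ⟨jq, by
    rw [mem_sphere_zero_iff_norm, show ‖jq‖ = Real.sqrt (normSq jq) from rfl]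
    rw [normSq_def']
    simp [jq]⟩

def NormalizesS1 (g : S3) : Prop := ∀ z : S3, inS1 z → ∃ z' : S3, inS1 z' ∧ g * z = z' * g

def leftMulQ (g : S3) (hg : NormalizesS1 g) : Q → Q :=
  Quot.lift (fun x => Quot.mk cosetRel (g * x)) <| by
    rintro x _ ⟨z, hz, rfl⟩
    obtain ⟨z', hz', hgz⟩ := hg z hz
    exact Quot.sound ⟨z', hz', by rw [← mul_assoc, hgz, mul_assoc]⟩

theorem commute_prodMap_leftMulQ_Fmap (g : S3) (hg : NormalizesS1 g) :
    Function.Commute (Prod.map (leftMulQ g hg) id) Fmap := by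
  rintro ⟨⟨x⟩, y⟩
  exact congrArg (fun x => (Quot.mk cosetRel x, y⁻¹)) (mul_assoc g x y).symm

theorem commute_prodMap_lmap (φ : Q → Q) : Function.Commute (Prod.map φ id) lmap :=
  fun _ => rfl

theorem commute_fmap {φ : Q × S3 → Q × S3} (hF : Function.Commute φ Fmap)
    (hl : Function.Commute φ lmap) : ∀ d, Function.Commute φ (fmap d)
  | 0 => hl
  | d + 1 => hF.comp_right (hl.comp_right (commute_fmap hF hl d))

theorem coe_inv_S3 (z : S3) : ((z⁻¹ : S3) : ℍ[ℝ]) = star (z : ℍ[ℝ]) := by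
  have hz : normSq (z : ℍ[ℝ]) = 1 := by
    rw [normSq_eq_norm_mul_self, mem_sphere_zero_iff_norm.mp z.2, one_mul]
  rw [Metric.unitSphere.coe_inv, Quaternion.inv_def, hz, inv_one, one_smul]

theorem inS1_inv {z : S3} (hz : inS1 z) : inS1 z⁻¹ := by
  simpa only [inS1, coe_inv_S3, imJ_star, imK_star, neg_eq_zero] using hz

theorem jq_mul_eq_star_mul_jq {z : ℍ[ℝ]} (hj : z.imJ = 0) (hk : z.imK = 0) :
    jq * z = star z * jq := by
  ext <;> simp only [re_mul, imI_mul, imJ_mul, imK_mul, hj, hk] <;> simp [jq, hj, hk]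

theorem jS3_mul_eq_inv_mul_jS3 {z : S3} (hz : inS1 z) : jS3 * z = z⁻¹ * jS3 :=
  Subtype.ext <| by
    rw [Metric.unitSphere.coe_mul, Metric.unitSphere.coe_mul, coe_inv_S3]
    exact jq_mul_eq_star_mul_jq hz.1 hz.2

theorem normalizesS1_jS3 : NormalizesS1 jS3 :=
  fun z hz => ⟨z⁻¹, inS1_inv hz, jS3_mul_eq_inv_mul_jS3 hz⟩

/-- Let `ι̂ : Q × S³ → Q × S³` be `ι̂(S¹x, y) = (S¹(j·x), y)`. Then `ι̂ ∘ f_d = f_d ∘ ι̂`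
for every `d ≥ 0`; in particular `ι̂ ∘ F = F ∘ ι̂` and `ι̂ ∘ l = l ∘ ι̂`. -/
theorem stmt8 :
    ∃ ihat : Q × S3 → Q × S3,
      (∀ x y : S3, ihat (Quot.mk cosetRel x, y) = (Quot.mk cosetRel (jS3 * x), y)) ∧
      (∀ d : ℕ, ihat ∘ fmap d = fmap d ∘ ihat) ∧
      ihat ∘ Fmap = Fmap ∘ ihat ∧ ihat ∘ lmap = lmap ∘ ihat := by
  have hF := commute_prodMap_leftMulQ_Fmap jS3 normalizesS1_jS3
  have hl := commute_prodMap_lmap (leftMulQ jS3 normalizesS1_jS3)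
  exact ⟨_, fun _ _ => rfl, fun d => (commute_fmap hF hl d).comp_eq, hF.comp_eq, hl.comp_eq⟩
end
end
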